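/- arXiv:1905.03315 — 3 statements merged into one kernel-verified Lean document; each statement's English description precedes it below -/
import Mathlib

section
/- For every natural number i and every nonnegative integers j, k, the value ∫₀^{2π} s^i sin(s)^j cos(s)^k ds is a polynomial in π with rational coefficients of degree at most i+1. -/
/-!
Product-to-sum formulas write `sin s ^ j * cos s ^ k` as a rational combination of
`cos (n * s)` and `sin (n * s)` with `n ∈ ℤ`, and the moment `∫₀^{2π} s ^ i * f s` is `ℚ`-linear
in `f`. For `n = 0` the moment is `(2π) ^ (i + 1) / (i + 1)`. For `n ≠ 0`, integration by parts
lowers the power of `s` by one at the cost of the rational factor `(i + 1) / n` and the boundary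
term `-(2π) ^ (i + 1) / n` (as `sin (2πn) = 0` and `cos (2πn) = 1`), so by induction on `i`
every moment is a rational polynomial in `π` of degree at most `i + 1`.
-/

open Real Polynomial intervalIntegral

noncomputable def piDegreeLE (d : ℕ) : Submodule ℚ ℝ :=
  (degreeLE ℚ d).map (aeval π).toLinearMap

theorem mem_piDegreeLE {d : ℕ} {x : ℝ} :
    x ∈ piDegreeLE d ↔ ∃ p : ℚ[X], p.natDegree ≤ d ∧ aeval π p = x := by
  simp [piDegreeLE, mem_degreeLE, natDegree_le_iff_degree_le]

theorem piDegreeLE_mono {d e : ℕ} (h : d ≤ e) : piDegreeLE d ≤ piDegreeLE e :=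
  Submodule.map_mono (degreeLE_mono (by exact_mod_cast h))

theorem pi_pow_mem_piDegreeLE {k d : ℕ} (h : k ≤ d) : π ^ k ∈ piDegreeLE d :=
  mem_piDegreeLE.2 ⟨X ^ k, by simpa using h, by simp⟩

theorem Submodule.ratCast_mul_mem {K : Type*} [DivisionRing K] [CharZero K] (P : Submodule ℚ K)
    (q : ℚ) {x : K} (hx : x ∈ P) : (q : K) * x ∈ P := by
  simpa only [Rat.smul_def] using P.smul_mem q hx

theorem integral_pow_succ_mul_cos_mul {ω : ℝ} (hω : ω ≠ 0) (a b : ℝ) (i : ℕ) :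
    ∫ x in a..b, x ^ (i + 1) * cos (ω * x) =
      (b ^ (i + 1) * sin (ω * b) - a ^ (i + 1) * sin (ω * a)) / ω
        - (i + 1) / ω * ∫ x in a..b, x ^ i * sin (ω * x) := by
  have hv (x : ℝ) : HasDerivAt (fun x => sin (ω * x) / ω) (cos (ω * x)) x :=
    (((hasDerivAt_id' x).const_mul ω).sin.div_const ω).congr_deriv (by field_simp)
  rw [integral_mul_deriv_eq_deriv_mul (fun x _ => hasDerivAt_pow (i + 1) x) (fun x _ => hv x)
    ((by fun_prop : Continuous _).intervalIntegrable _ _)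
    ((by fun_prop : Continuous _).intervalIntegrable _ _)]
  simp only [Nat.add_sub_cancel, Nat.cast_add, Nat.cast_one]
  have hint : ∫ x in a..b, ((i : ℝ) + 1) * x ^ i * (sin (ω * x) / ω)
      = (i + 1) / ω * ∫ x in a..b, x ^ i * sin (ω * x) := by
    rw [← integral_const_mul]
    congr 1; funext x; ring
  rw [hint]
  ring

theorem integral_pow_succ_mul_sin_mul {ω : ℝ} (hω : ω ≠ 0) (a b : ℝ) (i : ℕ) :
    ∫ x in a..b, x ^ (i + 1) * sin (ω * x) =
      (a ^ (i + 1) * cos (ω * a) - b ^ (i + 1) * cos (ω * b)) / ω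
        + (i + 1) / ω * ∫ x in a..b, x ^ i * cos (ω * x) := by
  have hv (x : ℝ) : HasDerivAt (fun x => -cos (ω * x) / ω) (sin (ω * x)) x :=
    (((hasDerivAt_id' x).const_mul ω).cos.neg.div_const ω).congr_deriv (by field_simp)
  rw [integral_mul_deriv_eq_deriv_mul (fun x _ => hasDerivAt_pow (i + 1) x) (fun x _ => hv x)
    ((by fun_prop : Continuous _).intervalIntegrable _ _)
    ((by fun_prop : Continuous _).intervalIntegrable _ _)]
  simp only [Nat.add_sub_cancel, Nat.cast_add, Nat.cast_one]
  have hint : ∫ x in a..b, ((i : ℝ) + 1) * x ^ i * (-cos (ω * x) / ω)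
      = -((i + 1) / ω * ∫ x in a..b, x ^ i * cos (ω * x)) := by
    rw [← integral_const_mul, ← integral_neg]
    congr 1; funext x; ring
  rw [hint]
  ring

theorem Real.sin_int_mul_two_pi (n : ℤ) : sin (n * (2 * π)) = 0 := by
  simpa [mul_assoc, mul_comm, mul_left_comm] using sin_int_mul_pi (2 * n)

theorem integral_pow_mul_cos_sin_mem_piDegreeLE (n : ℤ) (i : ℕ) :
    (∫ x in 0..2 * π, x ^ i * cos (n * x)) ∈ piDegreeLE (i + 1) ∧
      (∫ x in 0..2 * π, x ^ i * sin (n * x)) ∈ piDegreeLE (i + 1) := by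
  rcases eq_or_ne n 0 with rfl | hn
  · simp only [Int.cast_zero, zero_mul, cos_zero, sin_zero, mul_one, mul_zero, integral_zero,
      integral_pow, zero_mem, and_true]
    have h : ((2 * π) ^ (i + 1) - 0 ^ (i + 1)) / (i + 1)
        = ((2 ^ (i + 1) / (i + 1) : ℚ) : ℝ) * π ^ (i + 1) := by
      push_cast; rw [zero_pow (Nat.succ_ne_zero i)]; ring
    rw [h]
    exact Submodule.ratCast_mul_mem _ _ (pi_pow_mem_piDegreeLE le_rfl)
  have hω : (n : ℝ) ≠ 0 := Int.cast_ne_zero.2 hn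
  induction i with
  | zero =>
    simp [integral_comp_mul_left (fun x => cos x) hω, integral_comp_mul_left (fun x => sin x) hω,
      sin_int_mul_two_pi, cos_int_mul_two_pi]
  | succ i ih =>
    rw [integral_pow_succ_mul_cos_mul hω, integral_pow_succ_mul_sin_mul hω]
    simp only [sin_int_mul_two_pi, cos_int_mul_two_pi, mul_zero, sin_zero, cos_zero]
    obtain ⟨hcos, hsin⟩ := ih
    have hmono := piDegreeLE_mono (Nat.le_succ (i + 1))
    constructor
    · convert Submodule.ratCast_mul_mem _ (-(i + 1) / n) (hmono hsin) using 1
      push_cast; ring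
    · convert add_mem (Submodule.ratCast_mul_mem _ (-2 ^ (i + 1) / n)
        (pi_pow_mem_piDegreeLE (Nat.le_succ (i + 1))))
        (Submodule.ratCast_mul_mem _ ((i + 1) / n) (hmono hcos)) using 1
      push_cast; rw [zero_pow (Nat.succ_ne_zero i)]; ring

noncomputable def trigPoly : Submodule ℚ (ℝ → ℝ) :=
  Submodule.span ℚ
    (Set.range (fun (n : ℤ) (x : ℝ) => cos (n * x)) ∪
      Set.range (fun (n : ℤ) (x : ℝ) => sin (n * x)))

theorem cos_int_mul_mem_trigPoly (n : ℤ) : (fun x => cos (n * x)) ∈ trigPoly :=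
  Submodule.subset_span (Or.inl ⟨n, rfl⟩)

theorem sin_int_mul_mem_trigPoly (n : ℤ) : (fun x => sin (n * x)) ∈ trigPoly :=
  Submodule.subset_span (Or.inr ⟨n, rfl⟩)

theorem continuous_of_mem_trigPoly {f : ℝ → ℝ} (hf : f ∈ trigPoly) : Continuous f := by
  induction hf using Submodule.span_induction with
  | mem f hf => rcases hf with ⟨n, rfl⟩ | ⟨n, rfl⟩ <;> fun_prop
  | zero => exact continuous_const
  | add f g _ _ hf hg => exact hf.add hg
  | smul q f _ hf => exact hf.const_smul q

theorem mem_trigPoly_of_two_mul_eq_add {f g h : ℝ → ℝ} (hg : g ∈ trigPoly) (hh : h ∈ trigPoly)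
    (e : ∀ x, 2 * f x = g x + h x) : f ∈ trigPoly := by
  have hf : f = (1 / 2 : ℚ) • (g + h) := by
    funext x; simp only [Pi.smul_apply, Pi.add_apply, Rat.smul_def, ← e x]; push_cast; ring
  exact hf ▸ Submodule.smul_mem _ _ (add_mem hg hh)

theorem cos_mul_mem_trigPoly {f : ℝ → ℝ} (hf : f ∈ trigPoly) :
    (fun x => cos x * f x) ∈ trigPoly := by
  suffices trigPoly ≤ trigPoly.comap (LinearMap.mulLeft ℚ cos) from this hf
  refine Submodule.span_le.2 (Set.union_subset ?_ ?_) <;> rintro _ ⟨n, rfl⟩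
  · refine mem_trigPoly_of_two_mul_eq_add (cos_int_mul_mem_trigPoly (1 - n))
      (cos_int_mul_mem_trigPoly (1 + n)) fun x => ?_
    simp only [LinearMap.mulLeft_apply, Pi.mul_apply, ← mul_assoc, two_mul_cos_mul_cos]
    push_cast; ring_nf
  · refine mem_trigPoly_of_two_mul_eq_add (sin_int_mul_mem_trigPoly (n - 1))
      (sin_int_mul_mem_trigPoly (n + 1)) fun x => ?_
    simp only [LinearMap.mulLeft_apply, Pi.mul_apply]
    rw [mul_comm (cos x), ← mul_assoc, two_mul_sin_mul_cos]
    push_cast; ring_nf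

theorem sin_mul_mem_trigPoly {f : ℝ → ℝ} (hf : f ∈ trigPoly) :
    (fun x => sin x * f x) ∈ trigPoly := by
  suffices trigPoly ≤ trigPoly.comap (LinearMap.mulLeft ℚ sin) from this hf
  refine Submodule.span_le.2 (Set.union_subset ?_ ?_) <;> rintro _ ⟨n, rfl⟩
  · refine mem_trigPoly_of_two_mul_eq_add (sin_int_mul_mem_trigPoly (1 - n))
      (sin_int_mul_mem_trigPoly (1 + n)) fun x => ?_
    simp only [LinearMap.mulLeft_apply, Pi.mul_apply, ← mul_assoc, two_mul_sin_mul_cos]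
    push_cast; ring_nf
  · refine mem_trigPoly_of_two_mul_eq_add (cos_int_mul_mem_trigPoly (1 - n))
      (neg_mem (cos_int_mul_mem_trigPoly (1 + n))) fun x => ?_
    simp only [LinearMap.mulLeft_apply, Pi.mul_apply, Pi.neg_apply, ← mul_assoc,
      two_mul_sin_mul_sin]
    push_cast; ring_nf

theorem sin_pow_mul_cos_pow_mem_trigPoly (j k : ℕ) :
    (fun x => sin x ^ j * cos x ^ k) ∈ trigPoly := by
  induction j with
  | zero =>
    induction k with
    | zero => simpa using cos_int_mul_mem_trigPoly 0
    | succ k ih => simpa only [pow_zero, one_mul, pow_succ'] using cos_mul_mem_trigPoly ih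
  | succ j ih =>
    convert sin_mul_mem_trigPoly ih using 1
    funext x; ring

theorem integral_pow_mul_mem_piDegreeLE {f : ℝ → ℝ} (hf : f ∈ trigPoly) (i : ℕ) :
    (∫ x in 0..2 * π, x ^ i * f x) ∈ piDegreeLE (i + 1) := by
  induction hf using Submodule.span_induction with
  | mem f hf =>
    rcases hf with ⟨n, rfl⟩ | ⟨n, rfl⟩
    exacts [(integral_pow_mul_cos_sin_mem_piDegreeLE n i).1,
      (integral_pow_mul_cos_sin_mem_piDegreeLE n i).2]
  | zero => simp
  | add f g hf hg ihf ihg =>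
    have hint {h : ℝ → ℝ} (hh : h ∈ trigPoly) :
        IntervalIntegrable (fun x => x ^ i * h x) MeasureTheory.volume 0 (2 * π) :=
      ((continuous_pow i).mul (continuous_of_mem_trigPoly hh)).intervalIntegrable _ _
    simp only [Pi.add_apply, mul_add]
    rw [integral_add (hint hf) (hint hg)]
    exact add_mem ihf ihg
  | smul q f _ ihf =>
    simp only [Pi.smul_apply, mul_smul_comm, integral_smul]
    exact Submodule.smul_mem _ q ihf

theorem stmt6 (i j k : ℕ) :
    ∃ p : Polynomial ℚ, p.natDegree ≤ i + 1 ∧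
      (∫ s in (0:ℝ)..(2 * π), s ^ i * Real.sin s ^ j * Real.cos s ^ k)
        = Polynomial.aeval π p := by
  obtain ⟨p, hp, hπ⟩ :=
    mem_piDegreeLE.1 (integral_pow_mul_mem_piDegreeLE (sin_pow_mul_cos_pow_mem_trigPoly j k) i)
  exact ⟨p, hp, by simpa only [mul_assoc] using hπ.symm⟩
end

section
/- For any strictly increasing exponents 0 ≤ s₁ < ⋯ < s_m, there exist nonzero real coefficients a₁, …, a_m such that the polynomial m(x) = Σⱼ aⱼ x^{sⱼ} has exactly m−1 distinct positive real roots. -/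
/-!
By Descartes' rule of signs, a nonzero sum `∑ aⱼ x^{sⱼ}` has at most (number of nonzero
`aⱼ`) − 1 positive roots. Conversely, asking such a sum to vanish at the `m − 1` points
`1, …, m − 1` is a system of `m − 1` linear equations in the `m` unknowns `aⱼ`, so it has a
nontrivial solution. For that solution the rule of signs gives
`m − 1 ≤ #roots ≤ #{j | aⱼ ≠ 0} − 1 ≤ m − 1`, which forces every `aⱼ` to be nonzero and the
roots to be exactly `1, …, m − 1`.
-/

open Polynomial Finset Matrix

namespace Polynomial

theorem signVariations_le_card_support_sub_one {R : Type*} [Semiring R] [LinearOrder R]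
    (P : R[X]) : P.signVariations ≤ #P.support - 1 := by
  induction hn : #P.support generalizing P with
  | zero => simp [card_support_eq_zero.mp hn]
  | succ n ih =>
    rcases n.eq_zero_or_pos with rfl | hn_pos
    · obtain ⟨k, c, rfl⟩ := card_support_le_one_iff_monomial.mp hn.le
      simp [signVariations_monomial]
    · calc P.signVariations ≤ P.eraseLead.signVariations + 1 := signVariations_le_eraseLead_succ P
        _ ≤ n - 1 + 1 := by grw [ih _ (by rw [card_support_eraseLead, hn]; rfl)]
        _ = n + 1 - 1 := by omega

section Roots

variable {R : Type*} [CommRing R] [LinearOrder R] [IsStrictOrderedRing R] {p : R[X]}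

theorem finite_setOf_pos_isRoot (hp : p ≠ 0) : {x : R | 0 < x ∧ p.IsRoot x}.Finite :=
  (finite_setOfPred_isRoot hp).subset fun _ hx => hx.2

theorem ncard_setOf_pos_isRoot_le (hp : p ≠ 0) :
    {x : R | 0 < x ∧ p.IsRoot x}.ncard ≤ #p.support - 1 := by
  have hset : {x : R | 0 < x ∧ p.IsRoot x} = ↑(p.roots.filter (0 < ·)).toFinset := by
    ext x
    simp [mem_roots hp, and_comm]
  calc {x : R | 0 < x ∧ p.IsRoot x}.ncard = #(p.roots.filter (0 < ·)).toFinset := by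
        rw [hset, Set.ncard_coe_finset]
    _ ≤ p.roots.countP (0 < ·) := by
        rw [Multiset.countP_eq_card_filter]; exact Multiset.toFinset_card_le _
    _ ≤ p.signVariations := roots_countP_pos_le_signVariations p
    _ ≤ #p.support - 1 := signVariations_le_card_support_sub_one p

end Roots

section SumMonomial

variable {ι R : Type*} [Semiring R] (t : Finset ι) (s : ι → ℕ) (a : ι → R)

theorem card_support_sum_monomial_le [DecidablePred fun j => a j ≠ 0] :
    #(∑ j ∈ t, monomial (s j) (a j)).support ≤ #{j ∈ t | a j ≠ 0} := by
  refine (card_le_card fun n hn => ?_).trans (card_image_le (s := {j ∈ t | a j ≠ 0}) (f := s))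
  rw [mem_support_iff, finsetSum_coeff] at hn
  obtain ⟨j, hj, hjn⟩ := exists_ne_zero_of_sum_ne_zero hn
  obtain ⟨hsj, haj⟩ : s j = n ∧ a j ≠ 0 := by simpa [coeff_monomial] using hjn
  exact mem_image.2 ⟨j, mem_filter.2 ⟨hj, haj⟩, hsj⟩

theorem coeff_sum_monomial_of_injOn (hs : Set.InjOn s t) {k : ι} (hk : k ∈ t) :
    (∑ j ∈ t, monomial (s j) (a j)).coeff (s k) = a k := by
  rw [finsetSum_coeff, sum_eq_single k]
  · simp
  · intro j hj hjk
    rw [coeff_monomial, if_neg fun h => hjk (hs hj hk h)]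
  · exact fun hk' => absurd hk hk'

theorem sum_monomial_ne_zero (hs : Set.InjOn s t) (ha : ∃ j ∈ t, a j ≠ 0) :
    ∑ j ∈ t, monomial (s j) (a j) ≠ 0 := by
  obtain ⟨j, hj, haj⟩ := ha
  exact ne_of_apply_ne (coeff · (s j)) <| by simpa [coeff_sum_monomial_of_injOn t s a hs hj]

theorem isRoot_sum_monomial_iff (x : R) :
    (∑ j ∈ t, monomial (s j) (a j)).IsRoot x ↔ ∑ j ∈ t, a j * x ^ s j = 0 := by
  simp [IsRoot, eval_finsetSum]

end SumMonomial

end Polynomial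

section SparseSum

variable {ι R : Type*} [CommRing R] [LinearOrder R] [IsStrictOrderedRing R]
  {t : Finset ι} {s : ι → ℕ} {a : ι → R}

theorem finite_setOf_pos_sum_mul_pow_eq_zero (hs : Set.InjOn s t) (ha : ∃ j ∈ t, a j ≠ 0) :
    {x : R | 0 < x ∧ ∑ j ∈ t, a j * x ^ s j = 0}.Finite := by
  simpa only [isRoot_sum_monomial_iff] using
    finite_setOf_pos_isRoot (sum_monomial_ne_zero t s a hs ha)

theorem ncard_setOf_pos_sum_mul_pow_eq_zero_le [DecidablePred fun j => a j ≠ 0]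
    (hs : Set.InjOn s t) (ha : ∃ j ∈ t, a j ≠ 0) :
    {x : R | 0 < x ∧ ∑ j ∈ t, a j * x ^ s j = 0}.ncard ≤ #{j ∈ t | a j ≠ 0} - 1 := by
  simp only [← isRoot_sum_monomial_iff]
  exact (ncard_setOf_pos_isRoot_le (sum_monomial_ne_zero t s a hs ha)).trans
    (Nat.sub_le_sub_right (card_support_sum_monomial_le t s a) 1)

end SparseSum

theorem Matrix.exists_mulVec_eq_zero_of_card_lt {K m n : Type*} [Field K] [Fintype m] [Fintype n]
    (M : Matrix m n K) (h : Fintype.card m < Fintype.card n) : ∃ v ≠ 0, M *ᵥ v = 0 := by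
  have := M.mulVecLin.ker_ne_bot_of_finrank_lt (by simpa using h)
  obtain ⟨v, hv, hv0⟩ := (Submodule.ne_bot_iff _).mp this
  exact ⟨v, hv0, hv⟩

theorem exists_ne_zero_sum_mul_eq_zero_of_card_lt {ι K : Type*} [Field K] (t : Finset ι)
    (P : Finset K) (f : ι → K → K) (h : #P < #t) :
    ∃ a : ι → K, (∃ j ∈ t, a j ≠ 0) ∧ ∀ x ∈ P, ∑ j ∈ t, a j * f j x = 0 := by
  classical
  obtain ⟨c, hc0, hc⟩ := (Matrix.of fun (x : P) (j : t) => f j x).exists_mulVec_eq_zero_of_card_lt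
    (by simpa using h)
  let a : ι → K := fun i => if hi : i ∈ t then c ⟨i, hi⟩ else 0
  have ha : ∀ j : t, a j = c j := fun j => dif_pos j.2
  refine ⟨a, ?_, fun x hx => ?_⟩
  · obtain ⟨j, hj⟩ := Function.ne_iff.mp hc0
    exact ⟨j, j.2, by rwa [ha]⟩
  · rw [← sum_coe_sort t]
    simpa [ha, mulVec, dotProduct, mul_comm] using congrFun hc ⟨x, hx⟩

theorem stmt8 (m : ℕ) (hm : 1 ≤ m) (s : ℕ → ℕ)
    (hs : ∀ j, j + 1 < m → s j < s (j + 1)) :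
    ∃ a : ℕ → ℝ, (∀ j < m, a j ≠ 0) ∧
      {x : ℝ | 0 < x ∧ ∑ j ∈ Finset.range m, a j * x ^ s j = 0}.Finite ∧
      {x : ℝ | 0 < x ∧ ∑ j ∈ Finset.range m, a j * x ^ s j = 0}.ncard = m - 1 := by
  classical
  have hinj : Set.InjOn s (range m) :=
    (strictMonoOn_Iic_of_lt_succ (n := m - 1) fun j hj => hs j (by omega)).injOn.mono
      fun j hj => by simp only [coe_range, Set.mem_Iio, Set.mem_Iic] at hj ⊢; omega
  set P : Finset ℝ := (range (m - 1)).image fun k : ℕ => (k : ℝ) + 1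
  have hP : #P = m - 1 := by
    rw [card_image_of_injective _ fun k l hkl => by simpa using hkl, card_range]
  obtain ⟨a, ha, hPa⟩ :=
    exists_ne_zero_sum_mul_eq_zero_of_card_lt (range m) P (fun j x => x ^ s j)
      (by rw [hP, card_range]; omega)
  have hfin := finite_setOf_pos_sum_mul_pow_eq_zero hinj ha
  have hupper := ncard_setOf_pos_sum_mul_pow_eq_zero_le hinj ha
  have hlower : m - 1 ≤ {x : ℝ | 0 < x ∧ ∑ j ∈ range m, a j * x ^ s j = 0}.ncard := by
    rw [← hP, ← Set.ncard_coe_finset]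
    refine Set.ncard_le_ncard (fun x hx => ⟨?_, hPa x hx⟩) hfin
    obtain ⟨k, -, rfl⟩ := mem_image.mp hx
    positivity
  obtain ⟨j₀, hj₀, haj₀⟩ := ha
  have hpos : 0 < #{j ∈ range m | a j ≠ 0} := card_pos.mpr ⟨j₀, mem_filter.2 ⟨hj₀, haj₀⟩⟩
  have hle : #{j ∈ range m | a j ≠ 0} ≤ m := (card_filter_le _ _).trans_eq (card_range m)
  have hall : #{j ∈ range m | a j ≠ 0} = #(range m) := by
    rw [card_range]
    omega
  exact ⟨a, fun j hj => card_filter_eq_iff.mp hall j (mem_range.2 hj), hfin, by omega⟩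
end

section
/- Under the averaging setting with F₀ = 0, if y_j(2π, z), viewed as a function of the parameters, is a polynomial in π with rational-coefficient polynomial coefficients of degree at most j in π for every j < i, and the integrand of y_i is built from products ∏ⱼ y_j^{bⱼ} with Σ j·bⱼ = ℓ ≤ i−1, then the degree in θ of any such product is at most i−1, and consequently y_i(2π, z) is a polynomial in π of degree at most i. -/
/-!
θ-degrees add under multiplication, so the spans of the sets `polyTrig m` form a graded monoid;
a product `∏ y_j ^ b_j` with `∑ j b_j = ℓ` therefore has θ-degree at most `ℓ`.

For the period integral, product-to-sum formulas turn `θ^a sin^c θ cos^d θ` into a rational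
combination of `θ^a cos(kθ + jπ/2)`. Integration by parts in `a` shows that these have
antiderivatives of the same shape and θ-degree at most `a + 1`. Between `0` and `2π` such an
antiderivative changes by a rational polynomial in `π` of degree at most `a + 1`, because
`cos(2πk + jπ/2) = cos(jπ/2) ∈ {0, ±1}`.
-/

open Real

/-- Monomial functions `θ ↦ θ^a · sin(θ)^c · cos(θ)^d` with θ-degree `a ≤ i`. -/
def polyTrig (i : ℕ) : Set (ℝ → ℝ) :=
  {f | ∃ (a c d : ℕ), a ≤ i ∧
    f = fun θ => θ ^ a * Real.sin θ ^ c * Real.cos θ ^ d}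

open Submodule Pointwise

theorem SetLike.gradedMonoid_span {ι R A : Type*} [AddMonoid ι] [CommSemiring R] [Semiring A]
    [Algebra R A] (S : ι → Set A) (one_mem : 1 ∈ span R (S 0))
    (mul_subset : ∀ m n, S m * S n ⊆ span R (S (m + n))) :
    SetLike.GradedMonoid fun m => span R (S m) where
  one_mem := one_mem
  mul_mem m n _ _ ha hb := by
    have := mul_mem_mul ha hb
    rw [span_mul_span] at this
    exact span_le.mpr (mul_subset m n) this

theorem polyTrig_mono {m n : ℕ} (h : m ≤ n) : polyTrig m ⊆ polyTrig n := by
  rintro f ⟨a, c, d, ha, rfl⟩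
  exact ⟨a, c, d, ha.trans h, rfl⟩

instance : SetLike.GradedMonoid fun m => span ℚ (polyTrig m) :=
  SetLike.gradedMonoid_span _ (subset_span ⟨0, 0, 0, le_rfl, by ext; simp⟩) fun m n => by
    rintro _ ⟨_, ⟨a, c, d, ha, rfl⟩, _, ⟨a', c', d', ha', rfl⟩, rfl⟩
    refine subset_span ⟨a + a', c + c', d + d', add_le_add ha ha', ?_⟩
    ext θ
    simp only [Pi.mul_apply]
    ring

theorem prod_pow_mem_span_polyTrig (y : ℕ → ℝ → ℝ) (b : ℕ → ℕ) (s : Finset ℕ)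
    (hy : ∀ j ∈ s, y j ∈ span ℚ (polyTrig j)) :
    (fun θ => ∏ j ∈ s, y j θ ^ b j) ∈ span ℚ (polyTrig (∑ j ∈ s, j * b j)) := by
  have := SetLike.prod_pow_mem_graded (fun m => span ℚ (polyTrig m)) id y b hy
  simp only [id, smul_eq_mul, mul_comm (b _)] at this
  convert this
  simp [Finset.prod_apply]

/-- The phase `jπ/2` puts sines and cosines into one family, closed under products and under
differentiation. -/
noncomputable def trigMonomial (a : ℕ) (k j : ℤ) (θ : ℝ) : ℝ := θ ^ a * cos (k * θ + j * (π / 2))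

def trigMonomials (m : ℕ) : Set (ℝ → ℝ) := {f | ∃ a ≤ m, ∃ k j : ℤ, f = trigMonomial a k j}

noncomputable abbrev trigPolys (m : ℕ) : Submodule ℚ (ℝ → ℝ) := span ℚ (trigMonomials m)

theorem trigMonomials_mono {m n : ℕ} (h : m ≤ n) : trigMonomials m ⊆ trigMonomials n := by
  rintro f ⟨a, ha, k, j, rfl⟩
  exact ⟨a, ha.trans h, k, j, rfl⟩

theorem trigMonomial_mul (a b : ℕ) (k k' j j' : ℤ) :
    trigMonomial a k j * trigMonomial b k' j' =
      (1 / 2 : ℚ) • trigMonomial (a + b) (k + k') (j + j') +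
        (1 / 2 : ℚ) • trigMonomial (a + b) (k - k') (j - j') := by
  ext θ
  simp only [trigMonomial, Pi.mul_apply, Pi.add_apply, Pi.smul_apply, Rat.smul_def]
  push_cast
  rw [show (k + k' : ℝ) * θ + (j + j') * (π / 2)
      = (k * θ + j * (π / 2)) + (k' * θ + j' * (π / 2)) by ring,
    show (k - k' : ℝ) * θ + (j - j') * (π / 2)
      = (k * θ + j * (π / 2)) - (k' * θ + j' * (π / 2)) by ring]
  generalize k * θ + j * (π / 2) = u
  generalize k' * θ + j' * (π / 2) = v
  rw [cos_add, cos_sub]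
  ring

instance : SetLike.GradedMonoid trigPolys :=
  SetLike.gradedMonoid_span _ (subset_span ⟨0, le_rfl, 0, 0, by ext; simp [trigMonomial]⟩)
    fun m n => by
      rintro _ ⟨_, ⟨a, ha, k, j, rfl⟩, _, ⟨b, hb, k', j', rfl⟩, rfl⟩
      have hab : a + b ≤ m + n := add_le_add ha hb
      dsimp only
      rw [trigMonomial_mul]
      exact add_mem (smul_mem _ _ (subset_span ⟨_, hab, _, _, rfl⟩))
        (smul_mem _ _ (subset_span ⟨_, hab, _, _, rfl⟩))

theorem span_polyTrig_le_trigPolys (m : ℕ) : span ℚ (polyTrig m) ≤ trigPolys m := by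
  rw [span_le]
  rintro _ ⟨a, c, d, ha, rfl⟩
  have hpow : (fun θ : ℝ => θ ^ a) = trigMonomial a 0 0 := by
    ext θ; simp [trigMonomial]
  have hsin : sin = trigMonomial 0 1 (-1) := by
    ext θ; simp [trigMonomial, ← sub_eq_add_neg, cos_sub_pi_div_two]
  have hcos : cos = trigMonomial 0 1 0 := by
    ext θ; simp [trigMonomial]
  have hmem : (fun θ : ℝ => θ ^ a) * sin ^ c * cos ^ d ∈ trigPolys (a + c • 0 + d • 0) := by
    refine SetLike.mul_mem_graded (SetLike.mul_mem_graded ?_ (SetLike.pow_mem_graded c ?_))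
      (SetLike.pow_mem_graded d ?_) <;>
    simp only [hpow, hsin, hcos] <;> exact subset_span ⟨_, le_rfl, _, _, rfl⟩
  simp only [smul_zero, add_zero] at hmem
  exact span_mono (trigMonomials_mono ha) hmem

theorem hasDerivAt_trigMonomial (a : ℕ) (k j : ℤ) (x : ℝ) :
    HasDerivAt (trigMonomial a k j)
      (a * trigMonomial (a - 1) k j x + k * trigMonomial a k (j + 1) x) x := by
  have hcos : HasDerivAt (fun θ => cos (k * θ + j * (π / 2)))
      (-sin (k * x + j * (π / 2)) * k) x :=
    (((hasDerivAt_id x).const_mul (k : ℝ)).add_const _).cos.congr_deriv (by simp)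
  refine ((hasDerivAt_pow a x).fun_mul hcos).congr_deriv ?_
  simp only [trigMonomial]
  push_cast
  rw [add_mul, one_mul, ← add_assoc, cos_add_pi_div_two]
  ring

def derivatives (N : Submodule ℚ (ℝ → ℝ)) : Submodule ℚ (ℝ → ℝ) where
  carrier := {f | ∃ F ∈ N, ∀ x, HasDerivAt F (f x) x}
  add_mem' := by
    rintro f g ⟨F, hF, hF'⟩ ⟨G, hG, hG'⟩
    exact ⟨F + G, add_mem hF hG, fun x => (hF' x).add (hG' x)⟩
  zero_mem' := ⟨0, zero_mem N, fun x => hasDerivAt_const x 0⟩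
  smul_mem' := by
    rintro q f ⟨F, hF, hF'⟩
    exact ⟨q • F, smul_mem N q hF, fun x => (hF' x).const_smul q⟩

theorem trigMonomial_zero_mem_derivatives (a : ℕ) (j : ℤ) :
    trigMonomial a 0 j ∈ derivatives (trigPolys (a + 1)) := by
  refine ⟨(a + 1 : ℚ)⁻¹ • trigMonomial (a + 1) 0 j,
    smul_mem _ _ (subset_span ⟨_, le_rfl, _, _, rfl⟩), fun x => ?_⟩
  refine ((hasDerivAt_trigMonomial (a + 1) 0 j x).const_smul (a + 1 : ℚ)⁻¹).congr_deriv ?_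
  rw [Rat.smul_def]
  push_cast
  field_simp
  simp

theorem trigMonomial_mem_derivatives {k : ℤ} (hk : k ≠ 0) (a : ℕ) (j : ℤ) :
    trigMonomial a k j ∈ derivatives (trigPolys (a + 1)) := by
  induction a generalizing j with
  | zero =>
    refine ⟨(k : ℚ)⁻¹ • trigMonomial 0 k (j - 1),
      smul_mem _ _ (subset_span ⟨_, Nat.le_succ _, _, _, rfl⟩), fun x => ?_⟩
    refine ((hasDerivAt_trigMonomial 0 k (j - 1) x).const_smul (k : ℚ)⁻¹).congr_deriv ?_
    rw [Rat.smul_def, sub_add_cancel]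
    push_cast
    field_simp
    simp
  | succ a ih =>
    obtain ⟨G, hG, hG'⟩ := ih (j - 1)
    refine ⟨(k : ℚ)⁻¹ • trigMonomial (a + 1) k (j - 1) - ((a + 1) / k : ℚ) • G,
      sub_mem (smul_mem _ _ (subset_span ⟨_, Nat.le_succ _, _, _, rfl⟩))
        (smul_mem _ _ (span_mono (trigMonomials_mono (Nat.succ_le_succ a.le_succ)) hG)),
      fun x => ?_⟩
    refine (((hasDerivAt_trigMonomial (a + 1) k (j - 1) x).const_smul (k : ℚ)⁻¹).sub
      ((hG' x).const_smul ((a + 1) / k : ℚ))).congr_deriv ?_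
    simp only [Rat.smul_def, sub_add_cancel, add_tsub_cancel_right]
    push_cast
    field_simp
    ring

theorem trigPolys_le_derivatives (m : ℕ) : trigPolys m ≤ derivatives (trigPolys (m + 1)) := by
  refine span_le.mpr ?_
  rintro _ ⟨a, ha, k, j, rfl⟩
  obtain ⟨F, hF, hF'⟩ : trigMonomial a k j ∈ derivatives (trigPolys (a + 1)) := by
    rcases eq_or_ne k 0 with rfl | hk
    exacts [trigMonomial_zero_mem_derivatives a j, trigMonomial_mem_derivatives hk a j]
  exact ⟨F, span_mono (trigMonomials_mono (Nat.succ_le_succ ha)) hF, hF'⟩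

theorem continuous_of_mem_trigPolys {m : ℕ} {f : ℝ → ℝ} (hf : f ∈ trigPolys m) :
    Continuous f := by
  have : trigPolys m ≤ LinearMap.range (ContinuousMap.coeFnLinearMap ℚ (α := ℝ) (M := ℝ)) := by
    refine span_le.mpr ?_
    rintro _ ⟨a, -, k, j, rfl⟩
    exact ⟨⟨trigMonomial a k j, by unfold trigMonomial; fun_prop⟩, rfl⟩
  obtain ⟨f, rfl⟩ := this hf
  exact f.continuous

noncomputable def degreeLEAtPi (n : ℕ) : Submodule ℚ ℝ :=
  (Polynomial.degreeLE ℚ n).map (Polynomial.aeval π).toLinearMap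

theorem mem_degreeLEAtPi {n : ℕ} {x : ℝ} :
    x ∈ degreeLEAtPi n ↔ ∃ p : Polynomial ℚ, p.natDegree ≤ n ∧ x = Polynomial.aeval π p := by
  simp [degreeLEAtPi, Polynomial.mem_degreeLE, ← Polynomial.natDegree_le_iff_degree_le, eq_comm]

theorem pi_pow_mem_degreeLEAtPi {a n : ℕ} (h : a ≤ n) : π ^ a ∈ degreeLEAtPi n :=
  mem_degreeLEAtPi.mpr ⟨.X ^ a, by simpa using h, by simp⟩

theorem exists_rat_cos_int_mul_pi_div_two (j : ℤ) : ∃ q : ℚ, cos (j * (π / 2)) = q := by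
  obtain ⟨m, rfl | rfl⟩ := Int.even_or_odd' j
  · refine ⟨(-1) ^ m, ?_⟩
    rw [show ((2 * m : ℤ) : ℝ) * (π / 2) = m * π by push_cast; ring, cos_int_mul_pi]
    push_cast
    rfl
  · refine ⟨0, ?_⟩
    rw [show ((2 * m + 1 : ℤ) : ℝ) * (π / 2) = m * π + π / 2 by push_cast; ring,
      cos_add_pi_div_two, sin_int_mul_pi]
    simp

theorem apply_two_pi_sub_apply_zero_mem_degreeLEAtPi {n : ℕ} {F : ℝ → ℝ} (hF : F ∈ trigPolys n) :
    F (2 * π) - F 0 ∈ degreeLEAtPi n := by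
  let L : (ℝ → ℝ) →ₗ[ℚ] ℝ :=
    LinearMap.proj (R := ℚ) (φ := fun _ : ℝ => ℝ) (2 * π) -
      LinearMap.proj (R := ℚ) (φ := fun _ : ℝ => ℝ) 0
  suffices trigPolys n ≤ (degreeLEAtPi n).comap L from this hF
  refine span_le.mpr ?_
  rintro _ ⟨a, ha, k, j, rfl⟩
  obtain ⟨q, hq⟩ := exists_rat_cos_int_mul_pi_div_two j
  have hL : L (trigMonomial a k j) = (q * 2 ^ a : ℚ) • π ^ a - (q * 0 ^ a : ℚ) • π ^ 0 := by
    simp only [L, LinearMap.sub_apply, LinearMap.coe_proj, Function.eval, trigMonomial,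
      Rat.smul_def]
    rw [show (k : ℝ) * (2 * π) + j * (π / 2) = j * (π / 2) + k * (2 * π) by ring,
      cos_add_int_mul_two_pi, mul_zero, zero_add, hq]
    push_cast
    ring
  change L _ ∈ degreeLEAtPi n
  rw [hL]
  exact sub_mem (smul_mem _ _ (pi_pow_mem_degreeLEAtPi ha))
    (smul_mem _ _ (pi_pow_mem_degreeLEAtPi n.zero_le))

theorem integral_mem_degreeLEAtPi {m : ℕ} {f : ℝ → ℝ} (hf : f ∈ trigPolys m) :
    ∫ θ in (0 : ℝ)..2 * π, f θ ∈ degreeLEAtPi (m + 1) := by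
  obtain ⟨F, hF, hF'⟩ := trigPolys_le_derivatives m hf
  rw [intervalIntegral.integral_eq_sub_of_hasDerivAt (fun x _ => hF' x)
    ((continuous_of_mem_trigPolys hf).intervalIntegrable _ _)]
  exact apply_two_pi_sub_apply_zero_mem_degreeLEAtPi hF

theorem stmt18 (i : ℕ) (hi : 1 ≤ i)
    (y : ℕ → ℝ → ℝ)
    (hy : ∀ j, 1 ≤ j → j ≤ i - 1 → y j ∈ Submodule.span ℚ (polyTrig j))
    (g : ℝ → ℝ) (hg : g ∈ Submodule.span ℚ (polyTrig (i - 1)))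
    (yi : ℝ → ℝ) (hyi : ∀ θ, yi θ = ∫ s in (0:ℝ)..θ, g s) :
    (∀ ℓ, 1 ≤ ℓ → ℓ ≤ i - 1 → ∀ b : ℕ → ℕ,
      (∑ j ∈ Finset.Icc 1 ℓ, j * b j = ℓ) →
      (fun θ => ∏ j ∈ Finset.Icc 1 ℓ, y j θ ^ b j)
        ∈ Submodule.span ℚ (polyTrig (i - 1))) ∧
    ∃ p : Polynomial ℚ, p.natDegree ≤ i ∧ yi (2 * π) = Polynomial.aeval π p := by
  refine ⟨fun ℓ _ hℓ b hb => ?_, ?_⟩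
  · have hprod := prod_pow_mem_span_polyTrig y b (Finset.Icc 1 ℓ) fun j hj =>
      hy j (Finset.mem_Icc.mp hj).1 ((Finset.mem_Icc.mp hj).2.trans hℓ)
    rw [hb] at hprod
    exact span_mono (polyTrig_mono hℓ) hprod
  · have hint := integral_mem_degreeLEAtPi (span_polyTrig_le_trigPolys (i - 1) hg)
    rw [Nat.sub_add_cancel hi, ← hyi] at hint
    exact mem_degreeLEAtPi.mp hint
end
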